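/- Let φ : G → Fin k be a perfect coloring of H with parameter matrix A such that φ((y·z)·(y·z)·v) = φ(v) for every v ∈ X, and suppose that y·z is not a period of φ, i.e. φ(y·z·w) ≠ φ(w) for some w ∈ G. Then the set of perfect colorings of H with parameter matrix A is infinite. -/

import Mathlib

namespace HexGrid

/-- Relations of the hexagonal grid group: x² = y² = z² = (x·y·z)² = 1. -/
def hexRels : Set (FreeGroup (Fin 3)) :=
  {FreeGroup.of 0 * FreeGroup.of 0,
   FreeGroup.of 1 * FreeGroup.of 1,
   FreeGroup.of 2 * FreeGroup.of 2,
   FreeGroup.of 0 * FreeGroup.of 1 * FreeGroup.of 2 *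
     (FreeGroup.of 0 * FreeGroup.of 1 * FreeGroup.of 2)}

/-- The group `G = ⟨x, y, z ∣ x² = y² = z² = (x·y·z)² = 1⟩`. -/
abbrev G := PresentedGroup hexRels

/-- The generators of `G`. -/
def gen (i : Fin 3) : G := PresentedGroup.of i

def x : G := gen 0
def y : G := gen 1
def z : G := gen 2

lemma gen_mul_self (i : Fin 3) : gen i * gen i = 1 := by
  have h : FreeGroup.of i * FreeGroup.of i ∈ Subgroup.normalClosure hexRels :=
    Subgroup.subset_normalClosure (by fin_cases i <;> simp [hexRels])
  exact (QuotientGroup.eq_one_iff _).mpr h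

/-- The infinite hexagonal grid `H`: the Cayley graph of `G` with respect to `{x, y, z}`;
`u` and `v` are adjacent iff `v ∈ {u·x, u·y, u·z}`. -/
def H : SimpleGraph G where
  Adj u v := u ≠ v ∧ ∃ i : Fin 3, v = u * gen i
  symm := by
    constructor
    rintro u v ⟨hne, i, rfl⟩
    exact ⟨hne.symm, i, by rw [mul_assoc, gen_mul_self, mul_one]⟩
  loopless := by constructor; rintro u ⟨hne, -⟩; exact hne rfl

/-- `φ` is a perfect coloring of `H` with parameter matrix `A`: for every vertex `u` and
every color `j`, the number of neighbors of `u` in `H` colored `j` equals `A (φ u) j`. -/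
def IsPerfectColoring {k : ℕ} (φ : G → Fin k) (A : Matrix (Fin k) (Fin k) ℕ) : Prop :=
  ∀ u : G, ∀ j : Fin k, Set.ncard {v : G | H.Adj u v ∧ φ v = j} = A (φ u) j

/-- A matrix is tridiagonal if its entries vanish whenever the indices differ by more
than one. -/
def IsTridiagonal {k : ℕ} (A : Matrix (Fin k) (Fin k) ℕ) : Prop :=
  ∀ i j : Fin k, ((i : ℕ) + 1 < (j : ℕ) ∨ (j : ℕ) + 1 < (i : ℕ)) → A i j = 0

/-- Two colorings are equivalent if one is obtained from the other by composing with a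
graph automorphism of `H`. -/
def EquivColoring {k : ℕ} (φ ψ : G → Fin k) : Prop :=
  ∃ g : H ≃g H, ψ = fun v => φ (g v)

/-- The double (zigzag) line `X = {(y·z)ⁿ : n ∈ ℤ} ∪ {(y·z)ⁿ·x : n ∈ ℤ}`. -/
def Xline : Set G := {g : G | ∃ n : ℤ, g = (y * z) ^ n ∨ g = (y * z) ^ n * x}

end HexGrid

/-!
Write every element of `G` as `nf p q e = aᵖ bᵠ xᵉ` with `a = y·z`, `b = z·x`. Then `H` is the
hexagonal lattice: row `q` is a zigzag line (row `0` is `X`), and its even vertex `nf p q false`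
has two neighbours `nf p (q+1) true`, `nf (p+1) (q+1) true` in row `q + 1`.

If `φ` is `a²`-periodic on row `n`, the colours `cᵢ` of the odd vertices of row `n + 1` satisfy
`{cᵢ, cᵢ₊₁} = {cᵢ₊₂, cᵢ₊₃}` as multisets, which forces `cᵢ₊₂ = cᵢ`; so `a²`-periodicity spreads
from `X` to every row. Consequently shifting all rows `≥ c` one step along `a` (the shear at `c`)
keeps `φ` perfect. If there were only finitely many perfect colourings, the translates of `φ` by
powers of `b` would repeat, giving a vertical period `bˢ`; the vertices `v` with `φ(a v) ≠ φ v`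
then occur in rows `q₀ + n s` for all `n`, and the shears at these rows are pairwise distinct.
-/

section

variable {α : Type*}

lemma Multiset.pair_eq_pair_iff {a b c d : α} :
    ({a, b} : Multiset α) = {c, d} ↔ a = c ∧ b = d ∨ a = d ∧ b = c := by
  simp only [Multiset.insert_eq_cons, Multiset.cons_eq_cons, Multiset.singleton_inj,
    Multiset.singleton_eq_cons_iff]
  by_cases a = b <;> aesop

lemma eq_of_forall_pair_eq_pair {c : ℤ → α}
    (h : ∀ i, ({c i, c (i + 1)} : Multiset α) = {c (i + 2), c (i + 3)}) (i : ℤ) :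
    c (i + 2) = c i := by
  have h₁ := h i
  have h₂ := h (i + 1)
  rw [Multiset.pair_eq_pair_iff] at h₁ h₂
  rw [show i + 1 + 1 = i + 2 by ring, show i + 1 + 2 = i + 3 by ring] at h₂
  rcases h₁ with ⟨h₀₂, -⟩ | ⟨h₀₃, h₁₂⟩
  · exact h₀₂.symm
  · rcases h₂ with ⟨h₁₃, -⟩ | ⟨h₁₄, h₂₃⟩
    · rw [← h₁₂, h₁₃, ← h₀₃]
    · rw [h₂₃, ← h₀₃]

end

lemma apply_pow_mul_eq {M α : Type*} [Monoid M] {φ : M → α} {g : M} (h : ∀ v, φ (g * v) = φ v)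
    (n : ℕ) (v : M) : φ (g ^ n * v) = φ v := by
  induction n with
  | zero => rw [pow_zero, one_mul]
  | succ n ih => rw [pow_succ', mul_assoc, h, ih]

namespace HexGrid

lemma x_mul_x : x * x = 1 := gen_mul_self 0
lemma y_mul_y : y * y = 1 := gen_mul_self 1
lemma z_mul_z : z * z = 1 := gen_mul_self 2

lemma x_inv : x⁻¹ = x := inv_eq_of_mul_eq_one_right x_mul_x
lemma y_inv : y⁻¹ = y := inv_eq_of_mul_eq_one_right y_mul_y
lemma z_inv : z⁻¹ = z := inv_eq_of_mul_eq_one_right z_mul_z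

lemma x_mul_y_mul_z : x * (y * z) = z * (y * x) := by
  have h : x * y * z * (x * y * z) = 1 :=
    (QuotientGroup.eq_one_iff _).mpr (Subgroup.subset_normalClosure (by simp [hexRels]))
  rw [← mul_assoc, mul_eq_one_iff_eq_inv.mp h]
  simp only [mul_inv_rev, x_inv, y_inv, z_inv, mul_assoc]

def a : G := y * z
def b : G := z * x

lemma z_eq : z = b * x := by rw [b, mul_assoc, x_mul_x, mul_one]
lemma y_eq : y = a * z := by rw [a, mul_assoc, z_mul_z, mul_one]

lemma commute_a_b : Commute a b := by
  show y * z * (z * x) = z * x * (y * z)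
  rw [mul_assoc, ← mul_assoc z, z_mul_z, one_mul, mul_assoc, x_mul_y_mul_z, ← mul_assoc,
    z_mul_z, one_mul]

lemma semiconjBy_x_a : SemiconjBy x a a⁻¹ := by
  show x * (y * z) = (y * z)⁻¹ * x
  rw [x_mul_y_mul_z, mul_inv_rev, y_inv, z_inv, mul_assoc]

lemma semiconjBy_x_b : SemiconjBy x b b⁻¹ := by
  show x * (z * x) = (z * x)⁻¹ * x
  rw [mul_inv_rev, x_inv, z_inv, mul_assoc]

lemma x_mul_a_zpow (p : ℤ) : x * a ^ p = a ^ (-p) * x := by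
  rw [(semiconjBy_x_a.zpow_right p).eq, inv_zpow']

lemma x_mul_b_zpow (q : ℤ) : x * b ^ q = b ^ (-q) * x := by
  rw [(semiconjBy_x_b.zpow_right q).eq, inv_zpow']

def nf (p q : ℤ) (e : Bool) : G := a ^ p * b ^ q * cond e x 1

lemma a_mul_nf (p q : ℤ) (e : Bool) : a * nf p q e = nf (p + 1) q e := by
  rw [nf, nf, ← mul_assoc, ← mul_assoc, ← zpow_one_add, add_comm]

lemma b_zpow_mul_nf (n p q : ℤ) (e : Bool) : b ^ n * nf p q e = nf p (q + n) e := by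
  rw [nf, nf, ← mul_assoc, ← mul_assoc, ((commute_a_b.zpow_zpow p n).eq).symm]
  group

lemma x_mul_nf (p q : ℤ) (e : Bool) : x * nf p q e = nf (-p) (-q) !e := by
  rw [nf, nf, ← mul_assoc, ← mul_assoc, x_mul_a_zpow, mul_assoc _ x, x_mul_b_zpow]
  cases e <;> simp [mul_assoc, x_mul_x]

lemma nf_mul_x (p q : ℤ) (e : Bool) : nf p q e * x = nf p q !e := by
  cases e <;> simp [nf, mul_assoc, x_mul_x]

lemma nf_false_mul_a (p q : ℤ) : nf p q false * a = nf (p + 1) q false := by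
  simp only [nf, cond_false, mul_one, mul_assoc, ← (commute_a_b.zpow_right q).eq]
  group

lemma nf_true_mul_a (p q : ℤ) : nf p q true * a = nf (p - 1) q true := by
  simp only [nf, cond_true, mul_assoc, semiconjBy_x_a.eq]
  rw [← mul_assoc (b ^ q), ← (commute_a_b.inv_left.zpow_right q).eq]
  group

lemma nf_false_mul_b (p q : ℤ) : nf p q false * b = nf p (q + 1) false := by
  simp only [nf, cond_false, mul_one]
  group

lemma nf_true_mul_b (p q : ℤ) : nf p q true * b = nf p (q - 1) true := by
  simp only [nf, cond_true, mul_assoc, semiconjBy_x_b.eq]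
  group

lemma nf_false_mul_z (p q : ℤ) : nf p q false * z = nf p (q + 1) true := by
  rw [z_eq, ← mul_assoc, nf_false_mul_b, nf_mul_x, Bool.not_false]

lemma nf_true_mul_z (p q : ℤ) : nf p q true * z = nf p (q - 1) false := by
  rw [z_eq, ← mul_assoc, nf_true_mul_b, nf_mul_x, Bool.not_true]

lemma nf_false_mul_y (p q : ℤ) : nf p q false * y = nf (p + 1) (q + 1) true := by
  rw [y_eq, ← mul_assoc, nf_false_mul_a, nf_false_mul_z]

lemma nf_true_mul_y (p q : ℤ) : nf p q true * y = nf (p - 1) (q - 1) false := by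
  rw [y_eq, ← mul_assoc, nf_true_mul_a, nf_true_mul_z]

lemma exists_nf_eq_nf_mul_gen (p q : ℤ) (e : Bool) (i : Fin 3) :
    ∃ p' q' e', nf p' q' e' = nf p q e * gen i := by
  fin_cases i <;> cases e
  exacts [⟨_, _, _, (nf_mul_x p q false).symm⟩, ⟨_, _, _, (nf_mul_x p q true).symm⟩,
    ⟨_, _, _, (nf_false_mul_y p q).symm⟩, ⟨_, _, _, (nf_true_mul_y p q).symm⟩,
    ⟨_, _, _, (nf_false_mul_z p q).symm⟩, ⟨_, _, _, (nf_true_mul_z p q).symm⟩]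

lemma exists_nf_eq (g : G) : ∃ p q e, nf p q e = g := by
  have hg : g ∈ Subgroup.closure (Set.range gen) := by
    simp [show gen = PresentedGroup.of from rfl]
  induction hg using Subgroup.closure_induction_right with
  | one => exact ⟨0, 0, false, by simp [nf]⟩
  | mul_right g _ s hs ih =>
    obtain ⟨i, rfl⟩ := hs
    obtain ⟨p, q, e, rfl⟩ := ih
    exact exists_nf_eq_nf_mul_gen p q e i
  | mul_inv_cancel g _ s hs ih =>
    obtain ⟨i, rfl⟩ := hs
    obtain ⟨p, q, e, rfl⟩ := ih
    rw [inv_eq_of_mul_eq_one_right (gen_mul_self i)]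
    exact exists_nf_eq_nf_mul_gen p q e i

open DihedralGroup

-- The images are chosen so that `a ↦ (r 1, 1)` and `b ↦ (1, r 1)`: the two components of
-- `coords` record the exponents of `a` and `b` (`coords_nf`), and `row` reads off the latter.
lemma coordsGen_rels :
    ∀ r ∈ hexRels, FreeGroup.lift
      ![((sr 0, sr 0) : DihedralGroup 0 × DihedralGroup 0), (sr (-1), sr (-1)), (sr 0, sr (-1))]
      r = 1 := by
  simp [hexRels, Prod.ext_iff]

def coords : G →* DihedralGroup 0 × DihedralGroup 0 := PresentedGroup.toGroup coordsGen_rels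

def row (g : G) : ℤ :=
  match (coords g).2 with
  | r i => i
  | sr i => -i

lemma coords_x : coords x = (sr 0, sr 0) := PresentedGroup.toGroup.of coordsGen_rels
lemma coords_y : coords y = (sr (-1), sr (-1)) := PresentedGroup.toGroup.of coordsGen_rels
lemma coords_z : coords z = (sr 0, sr (-1)) := PresentedGroup.toGroup.of coordsGen_rels

lemma coords_nf (p q : ℤ) (e : Bool) :
    coords (nf p q e) = cond e (sr (-p), sr (-q)) (r p, r q) := by
  have ha : coords a = (r 1, 1) := by simp [a, coords_y, coords_z]
  have hb : coords b = (1, r 1) := by simp [b, coords_x, coords_z]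
  cases e <;> simp [nf, ha, hb, coords_x, Prod.ext_iff] <;> exact ⟨rfl, rfl⟩

lemma row_nf (p q : ℤ) (e : Bool) : row (nf p q e) = q := by
  cases e <;> simp only [row, coords_nf, cond_false, cond_true]
  exact neg_neg q

lemma x_ne_y : x ≠ y := fun h => by simpa [coords_x, coords_y] using congrArg coords h
lemma x_ne_z : x ≠ z := fun h => by simpa [coords_x, coords_z] using congrArg coords h
lemma y_ne_z : y ≠ z := fun h => by simpa [coords_y, coords_z] using congrArg coords h

lemma adj_iff {u v : G} : H.Adj u v ↔ v = u * x ∨ v = u * y ∨ v = u * z := by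
  have hgen : (∃ i : Fin 3, v = u * gen i) ↔ v = u * x ∨ v = u * y ∨ v = u * z := by
    simp only [Fin.exists_fin_succ, Fin.exists_fin_zero, or_false]
    rfl
  show u ≠ v ∧ _ ↔ _
  rw [hgen, and_iff_right_of_imp]
  rintro (rfl | rfl | rfl) h <;>
    simpa [coords_x, coords_y, coords_z, ← r_zero] using congrArg coords (mul_eq_left.1 h.symm)

section NeighborColors

variable {α : Type*}

def nbrColors (φ : G → α) (u : G) : Multiset α := {φ (u * x), φ (u * y), φ (u * z)}

lemma ncard_adj_and_eq [DecidableEq α] (φ : G → α) (u : G) (j : α) :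
    {v | H.Adj u v ∧ φ v = j}.ncard = (nbrColors φ u).count j := by
  classical
  have hnbr :
      {v | H.Adj u v ∧ φ v = j} = ↑(({u * x, u * y, u * z} : Finset G).filter (φ · = j)) := by
    ext v
    simp [adj_iff]
  have hval : ({u * x, u * y, u * z} : Finset G).val = {u * x, u * y, u * z} := by
    simp [x_ne_y, x_ne_z, y_ne_z]
  have hmap : nbrColors φ u = Multiset.map φ {u * x, u * y, u * z} := rfl
  rw [hnbr, Set.ncard_coe_finset, hmap, Multiset.count_map, Finset.card_def, Finset.filter_val,
    hval]
  simp only [eq_comm]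

lemma nbrColors_nf_false (φ : G → α) (p q : ℤ) :
    nbrColors φ (nf p q false) =
      {φ (nf p q true), φ (nf (p + 1) (q + 1) true), φ (nf p (q + 1) true)} := by
  rw [nbrColors, nf_mul_x, nf_false_mul_y, nf_false_mul_z, Bool.not_false]

lemma nbrColors_nf_true (φ : G → α) (p q : ℤ) :
    nbrColors φ (nf p q true) =
      {φ (nf p q false), φ (nf (p - 1) (q - 1) false), φ (nf p (q - 1) false)} := by
  rw [nbrColors, nf_mul_x, nf_true_mul_y, nf_true_mul_z, Bool.not_true]

end NeighborColors

section PerfectColoring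

variable {k : ℕ} {φ ψ : G → Fin k} {A : Matrix (Fin k) (Fin k) ℕ}

lemma isPerfectColoring_iff :
    IsPerfectColoring φ A ↔ ∀ u j, (nbrColors φ u).count j = A (φ u) j := by
  simp only [IsPerfectColoring, ncard_adj_and_eq]

lemma IsPerfectColoring.nbrColors_eq (hφ : IsPerfectColoring φ A) {u v : G} (h : φ u = φ v) :
    nbrColors φ u = nbrColors φ v :=
  Multiset.ext.2 fun j => by rw [isPerfectColoring_iff.1 hφ, isPerfectColoring_iff.1 hφ, h]

lemma IsPerfectColoring.of_nbrColors (hφ : IsPerfectColoring φ A)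
    (h : ∀ u, ∃ v, ψ u = φ v ∧ nbrColors ψ u = nbrColors φ v) : IsPerfectColoring ψ A := by
  refine isPerfectColoring_iff.2 fun u j => ?_
  obtain ⟨v, hψ, hnbr⟩ := h u
  rw [hnbr, hψ, isPerfectColoring_iff.1 hφ]

lemma IsPerfectColoring.comp_mul_left (hφ : IsPerfectColoring φ A) (g : G) :
    IsPerfectColoring (fun v => φ (g * v)) A :=
  hφ.of_nbrColors fun u => ⟨g * u, rfl, by simp only [nbrColors, mul_assoc]⟩

end PerfectColoring

def RowPeriodic {α : Type*} (φ : G → α) (n : ℤ) : Prop :=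
  ∀ p e, φ (nf (p + 2) n e) = φ (nf p n e)

section Rows

variable {α : Type*} {φ : G → α} {n : ℤ}

lemma rowPeriodic_zero_of_xline (hX : ∀ v ∈ Xline, φ ((y * z) * (y * z) * v) = φ v) :
    RowPeriodic φ 0 := by
  intro p e
  have hv : nf p 0 e ∈ Xline := ⟨p, by cases e <;> simp [nf, a]⟩
  have h := hX _ hv
  rwa [← a, mul_assoc, a_mul_nf, a_mul_nf, add_assoc, one_add_one_eq_two] at h

lemma RowPeriodic.comp_x_mul (h : RowPeriodic φ n) : RowPeriodic (fun v => φ (x * v)) (-n) := by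
  intro p e
  have h' := h (-(p + 2)) (!e)
  rw [show -(p + 2) + 2 = -p by ring] at h'
  simp only [x_mul_nf, neg_neg, h']

def shear (φ : G → α) (c : ℤ) (v : G) : α :=
  if c ≤ row v then φ (a * v) else φ v

lemma shear_nf (c p q : ℤ) (e : Bool) :
    shear φ c (nf p q e) = if c ≤ q then φ (nf (p + 1) q e) else φ (nf p q e) := by
  rw [shear, row_nf, a_mul_nf]

lemma shear_ne_shear {c c' : ℤ} {v : G} (hc : c ≤ row v) (hc' : row v < c')
    (hv : φ (a * v) ≠ φ v) : shear φ c ≠ shear φ c' :=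
  fun h => hv (by simpa [shear, hc, not_le.2 hc'] using congrFun h v)

lemma injective_shear {s : ℕ} (hs : 0 < s)
    (hbs : ∀ v, φ (b ^ s * v) = φ v) {w : G} (hw : φ (a * w) ≠ φ w) :
    Function.Injective fun n : ℕ => shear φ (row w + n * s) := by
  refine Function.Injective.of_lt_imp_ne fun m n hmn => ?_
  have hrow : row ((b ^ s) ^ m * w) = row w + m * s := by
    obtain ⟨p, q, e, rfl⟩ := exists_nf_eq w
    rw [← pow_mul, ← zpow_natCast, b_zpow_mul_nf, row_nf, row_nf]
    push_cast
    ring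
  refine shear_ne_shear (v := (b ^ s) ^ m * w) hrow.ge ?_ ?_
  · rw [hrow]
    gcongr
  · rwa [← mul_assoc, ((commute_a_b.pow_right s).pow_right m).eq, mul_assoc,
      apply_pow_mul_eq hbs, apply_pow_mul_eq hbs]

end Rows

section PerfectRows

variable {k : ℕ} {φ : G → Fin k} {A : Matrix (Fin k) (Fin k) ℕ} {n : ℤ}

theorem IsPerfectColoring.rowPeriodic_succ (hφ : IsPerfectColoring φ A) (hn : RowPeriodic φ n) :
    RowPeriodic φ (n + 1) := by
  have hodd : ∀ p, φ (nf (p + 2) (n + 1) true) = φ (nf p (n + 1) true) := by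
    refine eq_of_forall_pair_eq_pair (c := fun i => φ (nf i (n + 1) true)) fun i => ?_
    have h := hφ.nbrColors_eq (hn i false)
    simp only [nbrColors_nf_false, hn i true, Multiset.insert_eq_cons] at h
    rw [Multiset.cons_inj_right, ← Multiset.insert_eq_cons, ← Multiset.insert_eq_cons,
      Multiset.pair_comm, eq_comm, Multiset.pair_comm] at h
    rwa [show i + 3 = i + 2 + 1 by ring]
  intro p e
  cases e
  -- The even vertex `nf p (n + 1) false` is the `x`-neighbour of an odd vertex whose two other
  -- neighbours lie in row `n`.
  · have h := hφ.nbrColors_eq (hodd p)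
    rw [nbrColors_nf_true, nbrColors_nf_true, add_sub_cancel_right,
      show p + 2 - 1 = p - 1 + 2 by ring, hn, hn] at h
    simpa only [Multiset.insert_eq_cons, Multiset.cons_inj_left] using h
  · exact hodd p

theorem IsPerfectColoring.rowPeriodic_pred (hφ : IsPerfectColoring φ A) (hn : RowPeriodic φ n) :
    RowPeriodic φ (n - 1) := by
  -- Left multiplication by `x` is an automorphism of `H` exchanging rows `n` and `-n`.
  have h := ((hφ.comp_mul_left x).rowPeriodic_succ hn.comp_x_mul).comp_x_mul
  simpa only [← mul_assoc, x_mul_x, one_mul, neg_add, neg_neg, ← sub_eq_add_neg] using h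

theorem IsPerfectColoring.rowPeriodic (hφ : IsPerfectColoring φ A) (h₀ : RowPeriodic φ 0)
    (n : ℤ) : RowPeriodic φ n := by
  induction n using Int.induction_on with
  | zero => exact h₀
  | succ n ih => exact hφ.rowPeriodic_succ ih
  | pred n ih => exact hφ.rowPeriodic_pred ih

theorem IsPerfectColoring.shear (hφ : IsPerfectColoring φ A) (hper : ∀ n, RowPeriodic φ n)
    (c : ℤ) : IsPerfectColoring (shear φ c) A := by
  -- Away from the rows `c - 1` and `c`, `shear φ c` agrees locally with `φ` or with `φ (a * ·)`;
  -- at an even vertex of row `c - 1` or an odd vertex of row `c` the period `a²` is needed.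
  refine hφ.of_nbrColors fun u => ?_
  obtain ⟨p, q, e, rfl⟩ := exists_nf_eq u
  cases e
  · simp only [nbrColors_nf_false, shear_nf]
    by_cases hq : c ≤ q
    · refine ⟨nf (p + 1) q false, if_pos hq, ?_⟩
      simp only [nbrColors_nf_false, hq, show c ≤ q + 1 by omega, if_true]
    by_cases hq' : c ≤ q + 1
    · refine ⟨nf p q false, if_neg hq, ?_⟩
      simp only [nbrColors_nf_false, hq, hq', if_true, if_false, add_assoc, one_add_one_eq_two,
        hper (q + 1) p true]
      exact congrArg _ (Multiset.pair_comm _ _)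
    · exact ⟨nf p q false, if_neg hq, by simp only [nbrColors_nf_false, hq, hq', if_false]⟩
  · simp only [nbrColors_nf_true, shear_nf]
    by_cases hq : c ≤ q - 1
    · refine ⟨nf (p + 1) q true, if_pos (by omega), ?_⟩
      simp only [nbrColors_nf_true, hq, show c ≤ q by omega, if_true, sub_add_cancel,
        add_sub_cancel_right]
    by_cases hq' : c ≤ q
    · refine ⟨nf (p + 1) q true, if_pos hq', ?_⟩
      simp only [nbrColors_nf_true, hq, hq', if_true, if_false, add_sub_cancel_right]
      rw [← hper (q - 1) (p - 1), show p - 1 + 2 = p + 1 by ring, Multiset.pair_comm]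
    · exact ⟨nf p q true, if_neg hq', by simp only [nbrColors_nf_true, hq, hq', if_false]⟩

lemma IsPerfectColoring.exists_pow_period (hφ : IsPerfectColoring φ A)
    (hfin : {ψ : G → Fin k | IsPerfectColoring ψ A}.Finite) (g : G) :
    ∃ s > 0, ∀ v, φ (g ^ s * v) = φ v := by
  obtain ⟨m, n, hmn, h⟩ := hfin.exists_lt_map_eq_of_forall_mem
    (f := fun n : ℕ => fun v => φ (g ^ n * v)) fun n => hφ.comp_mul_left (g ^ n)
  refine ⟨n - m, by omega, fun v => ?_⟩
  simpa [← mul_assoc, ← pow_sub _ hmn.le] using congrFun h.symm ((g ^ m)⁻¹ * v)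

end PerfectRows

/-- If a perfect coloring is `(y·z)²`-periodic on the double line `X` but `y·z` is not a
period of the whole coloring, then there are infinitely many perfect colorings with the
same parameter matrix. -/
theorem infinitely_many_colorings {k : ℕ} (φ : G → Fin k) (A : Matrix (Fin k) (Fin k) ℕ)
    (hφ : IsPerfectColoring φ A)
    (hX : ∀ v ∈ Xline, φ ((y * z) * (y * z) * v) = φ v)
    (hnp : ∃ w : G, φ ((y * z) * w) ≠ φ w) :
    {ψ : G → Fin k | IsPerfectColoring ψ A}.Infinite := by
  have hper : ∀ n, RowPeriodic φ n := hφ.rowPeriodic (rowPeriodic_zero_of_xline hX)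
  obtain ⟨w, hw⟩ := hnp
  intro hfin
  obtain ⟨s, hs, hbs⟩ := hφ.exists_pow_period hfin b
  exact Set.infinite_of_injective_forall_mem (injective_shear hs hbs hw)
    (fun n => hφ.shear hper _) hfin

end HexGrid
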